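/- The mechanism SVT_sum is ε-differentially private: for every pair of neighboring databases D ≈ D' and every possible transcript a (a finite sequence of Boolean comparison outcomes ending in the first 'yes' or, if none, consisting of all 'no's), Pr[SVT_sum run on D produces transcript a] ≤ e^{ε} · Pr[SVT_sum run on D' produces transcript a]; in particular the same multiplicative bound holds for the probability of each output in {0, 1}. -/

import Mathlib

/-!
Coupling argument. Let `c = 1` if `D'` is `D` with one element added and `c = 0` otherwise, so
that every query satisfies `q_j(D') ≤ q_j(D) + c` and `q_j(D) ≤ q_j(D') + (1 - c)`: the added
element is nonnegative and enters `q_j` only when it is at most `t_j`. Given a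
transcript `a`, translate the noise by `c` in `ρ` and by `1` in the noise of the comparison at
which `a` halts with a `yes`, if any. A `no` of the run on `D` stays a `no` on `D'`, since the
threshold moved up by `c`, at least as much as the query; the final `yes` stays a `yes`, since
the extra `1` of noise makes up for the remaining `1 - c`. So the translation maps the noise
producing `a` on `D` into the noise producing `a` on `D'`. Translating a `Lap(b)` variable by `t`
changes its density by a factor at most `exp (|t| / b)`, and the total translation is at most
`2 = ε b`, whence the factor `e^ε`. Summing over transcripts gives the bound for outputs.
-/

open MeasureTheory Real
open scoped Classical

/-- `Lap b` : the Laplace distribution on `ℝ` with density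
`x ↦ (1/(2b)) * exp (-|x|/b)` with respect to Lebesgue measure. -/
noncomputable def laplace (b : ℝ) : Measure ℝ :=
  volume.withDensity (fun x => ENNReal.ofReal ((1 / (2 * b)) * Real.exp (-|x| / b)))

/-- The scaled truncated sum query `q_j(D) = (Σ_{v ∈ D, v ≤ 2^j} v) / 2^j`. -/
noncomputable def qj (D : Multiset ℤ) (j : ℕ) : ℝ :=
  ((D.filter (fun v => v ≤ (2 : ℤ) ^ j)).sum : ℝ) / (2 : ℝ) ^ j

/-- Truncate a list of comparison outcomes at (and including) the first `true`;
if there is no `true`, the whole list of `false`s is kept. -/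
def firstYes : List Bool → List Bool
  | [] => []
  | b :: rest => if b then [true] else false :: firstYes rest

/-- All `2K` potential comparison outcomes of `SVT_sum` on database `D` with noise
`(ρ, ν, ν')`: first the `K` phase-1 comparisons `q_j(D) + ν_j ≥ r/t_j + ρ`
(`t_j = 2^j`, `j = 1, …, K`), then the `K` phase-2 comparisons
`q_j(D) + ν'_j ≥ (l+1)/t_j + ρ`. -/
noncomputable def svtOutcomes (K : ℕ) (l r : ℝ) (D : Multiset ℤ)
    (ρ : ℝ) (ν ν' : Fin K → ℝ) : List Bool :=
  (List.ofFn fun j : Fin K =>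
    decide (r / (2 : ℝ) ^ ((j : ℕ) + 1) + ρ ≤ qj D ((j : ℕ) + 1) + ν j)) ++
  (List.ofFn fun j : Fin K =>
    decide ((l + 1) / (2 : ℝ) ^ ((j : ℕ) + 1) + ρ ≤ qj D ((j : ℕ) + 1) + ν' j))

/-- The transcript of `SVT_sum`: the sequence of comparison outcomes up to and
including the first `yes`, or all `no`s if no comparison succeeds. -/
noncomputable def svtTranscript (K : ℕ) (l r : ℝ) (D : Multiset ℤ)
    (ρ : ℝ) (ν ν' : Fin K → ℝ) : List Bool :=
  firstYes (svtOutcomes K l r D ρ ν ν')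

/-- The output of `SVT_sum` determined by a transcript: output `1` (`true`) exactly
when the mechanism halted with a `yes` in phase 2 (transcript longer than `K` and
ending in `true`); otherwise output `0` (`false`). -/
noncomputable def svtOutput (K : ℕ) (t : List Bool) : Bool :=
  decide (K < t.length ∧ t.getLast? = some true)

/-- The joint distribution of the noise of `SVT_sum`: `ρ ~ Lap(2/ε)` and the two
independent families `ν, ν'` of `K` i.i.d. `Lap(2/ε)` samples. -/
noncomputable def svtNoise (ε : ℝ) (K : ℕ) :
    Measure (ℝ × (Fin K → ℝ) × (Fin K → ℝ)) :=
  (laplace (2 / ε)).prod ((Measure.pi fun _ : Fin K => laplace (2 / ε)).prod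
    (Measure.pi fun _ : Fin K => laplace (2 / ε)))

open scoped ENNReal NNReal

namespace MeasureTheory.Measure

variable {α α' β β' : Type*} [MeasurableSpace α] [MeasurableSpace α'] [MeasurableSpace β]
  [MeasurableSpace β']

theorem prod_le_smul_prod {μ μ' : Measure α} {ν ν' : Measure β} [SFinite ν] [SFinite ν']
    {k₁ k₂ : ℝ≥0} (h₁ : μ ≤ k₁ • μ') (h₂ : ν ≤ k₂ • ν') :
    μ.prod ν ≤ (k₁ * k₂) • μ'.prod ν' :=
  calc μ.prod ν ≤ (k₁ • μ').prod (k₂ • ν') := prod_mono h₁ h₂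
    _ = (k₁ * k₂) • μ'.prod ν' := by rw [prod_smul_left, prod_smul_right, smul_smul]

theorem map_prodMap_le_smul {μ : Measure α} {μ' : Measure α'} {ν : Measure β} {ν' : Measure β'}
    [SFinite μ] [SFinite ν] [SFinite ν'] {f : α → α'} {g : β → β'} (hf : Measurable f)
    (hg : Measurable g) {k₁ k₂ : ℝ≥0} (h₁ : μ.map f ≤ k₁ • μ') (h₂ : ν.map g ≤ k₂ • ν') :
    (μ.prod ν).map (Prod.map f g) ≤ (k₁ * k₂) • μ'.prod ν' := by
  rw [← map_prod_map μ ν hf hg]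
  exact prod_le_smul_prod h₁ h₂

universe u

theorem pi_le_smul_pi : ∀ {n : ℕ} {α : Fin n → Type u} [∀ i, MeasurableSpace (α i)]
    {μ ν : ∀ i, Measure (α i)} [∀ i, SigmaFinite (μ i)] [∀ i, SigmaFinite (ν i)]
    {k : Fin n → ℝ≥0}, (∀ i, μ i ≤ k i • ν i) → Measure.pi μ ≤ (∏ i, k i) • Measure.pi ν
  | 0, _, _, μ, ν, _, _, k, _ => by
    rw [Fin.prod_univ_zero, one_smul, pi_of_empty μ, pi_of_empty ν]
  | n + 1, α, _, μ, ν, _, _, k, h => by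
    have hμ := (measurePreserving_piFinSuccAbove μ 0).symm
    have hν := (measurePreserving_piFinSuccAbove ν 0).symm
    rw [← hμ.map_eq, ← hν.map_eq, Fin.prod_univ_succ, ← Measure.map_smul]
    exact map_mono (prod_le_smul_prod (h 0) (pi_le_smul_pi fun i => h i.succ))
      (MeasurableEquiv.measurable _)

theorem map_pi_le_smul {n : ℕ} {α β : Fin n → Type u} [∀ i, MeasurableSpace (α i)]
    [∀ i, MeasurableSpace (β i)] {μ : ∀ i, Measure (α i)} {μ' : ∀ i, Measure (β i)}
    [∀ i, SigmaFinite (μ' i)] {f : ∀ i, α i → β i} (hf : ∀ i, Measurable (f i))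
    {k : Fin n → ℝ≥0} (h : ∀ i, (μ i).map (f i) ≤ k i • μ' i) :
    (Measure.pi μ).map (fun x i => f i (x i)) ≤ (∏ i, k i) • Measure.pi μ' := by
  have := fun i => sigmaFinite_of_le _ (h i)
  rw [pi_map_pi fun i => (hf i).aemeasurable]
  exact pi_le_smul_pi h

theorem map_add_right_withDensity {G : Type*} [AddGroup G] [MeasurableSpace G]
    [MeasurableAdd G] (μ : Measure G) [μ.IsAddRightInvariant] {f : G → ℝ≥0∞} (hf : Measurable f)
    (c : G) : (μ.withDensity f).map (· + c) = μ.withDensity fun x => f (x - c) := by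
  have hfc : Measurable fun x => f (x - c) := by
    simpa only [Function.comp_def, sub_eq_add_neg] using hf.comp (measurable_add_const (-c))
  ext s hs
  rw [map_apply (measurable_add_const c) hs, withDensity_apply _ (measurable_add_const c hs),
    withDensity_apply _ hs]
  conv_rhs => rw [← map_add_right_eq_self μ c, setLIntegral_map hs hfc (measurable_add_const c)]
  simp

end MeasureTheory.Measure

theorem MeasureTheory.measure_preimage_le_of_forall_fiber {Ω β : Type*} [MeasurableSpace Ω]
    [Countable β] {μ ν : Measure Ω} {f g : Ω → β} (hf : ∀ b, MeasurableSet (f ⁻¹' {b}))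
    (hg : ∀ b, MeasurableSet (g ⁻¹' {b})) {k : ℝ≥0∞} (h : ∀ b, μ (f ⁻¹' {b}) ≤ k * ν (g ⁻¹' {b}))
    (s : Set β) : μ (f ⁻¹' s) ≤ k * ν (g ⁻¹' s) := by
  rw [← tsum_measure_preimage_singleton s.to_countable fun b _ => hf b,
    ← tsum_measure_preimage_singleton s.to_countable fun b _ => hg b, ← ENNReal.tsum_mul_left]
  exact ENNReal.tsum_le_tsum fun b => h b

theorem Real.exp_neg_abs_sub_div_le {b : ℝ} (hb : 0 < b) (x c : ℝ) :
    exp (-|x - c| / b) ≤ exp (|c| / b) * exp (-|x| / b) := by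
  have := abs_sub_abs_le_abs_sub x (x - c)
  rw [sub_sub_cancel] at this
  rw [← exp_add, exp_le_exp, ← add_div, div_le_div_iff_of_pos_right hb]
  linarith

instance (b : ℝ) : SigmaFinite (laplace b) := SigmaFinite.withDensity_ofReal _

theorem laplace_map_add_le {b : ℝ} (hb : 0 < b) (c : ℝ) :
    (laplace b).map (· + c) ≤ (exp (|c| / b)).toNNReal • laplace b := by
  have hf : Measurable fun x : ℝ => ENNReal.ofReal (1 / (2 * b) * exp (-|x| / b)) := by
    fun_prop
  rw [laplace, Measure.map_add_right_withDensity _ hf, ENNReal.smul_def, ← withDensity_smul _ hf]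
  refine withDensity_mono (.of_forall fun x => ?_)
  change ENNReal.ofReal _ ≤ ENNReal.ofReal _ * ENNReal.ofReal _
  rw [← ENNReal.ofReal_mul (exp_pos _).le, mul_left_comm]
  gcongr
  exact Real.exp_neg_abs_sub_div_le hb x c

theorem svtNoise_map_add_le {ε : ℝ} (hε : 0 < ε) {K : ℕ} (x : ℝ × (Fin K → ℝ) × (Fin K → ℝ)) :
    (svtNoise ε K).map (· + x) ≤
      (exp (ε / 2 * (|x.1| + ∑ i, |x.2.1 i| + ∑ i, |x.2.2 i|))).toNNReal • svtNoise ε K := by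
  have hb : 0 < 2 / ε := by positivity
  have hpi (s : Fin K → ℝ) : (Measure.pi fun _ => laplace (2 / ε)).map (· + s) ≤
      (exp (ε / 2 * ∑ i, |s i|)).toNNReal • Measure.pi fun _ => laplace (2 / ε) := by
    refine (Measure.map_pi_le_smul (fun i => measurable_add_const (s i))
      fun i => laplace_map_add_le hb (s i)).trans_eq ?_
    rw [← Real.toNNReal_prod_of_nonneg fun i _ => (exp_pos _).le, ← exp_sum, Finset.mul_sum]
    congr! 4 with i
    field_simp
  refine (Measure.map_prodMap_le_smul (measurable_add_const x.1)
    ((measurable_add_const x.2.1).prodMap (measurable_add_const x.2.2))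
    (laplace_map_add_le hb x.1)
    (Measure.map_prodMap_le_smul (measurable_add_const x.2.1) (measurable_add_const x.2.2)
      (hpi x.2.1) (hpi x.2.2))).trans_eq ?_
  rw [← Real.toNNReal_mul (exp_pos _).le, ← Real.toNNReal_mul (exp_pos _).le, ← exp_add,
    ← exp_add]
  congr 3
  field_simp
  ring

theorem firstYes_prefix : ∀ L : List Bool, firstYes L <+: L
  | [] => List.nil_prefix
  | false :: L => by simpa [firstYes] using firstYes_prefix L
  | true :: L => by simp [firstYes]

theorem eq_length_of_getElem?_firstYes_eq_true : ∀ {L : List Bool} {n : ℕ},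
    (firstYes L)[n]? = some true → n + 1 = (firstYes L).length
  | [], _, h => by simp [firstYes] at h
  | true :: _, n, h => by cases n <;> simp_all [firstYes]
  | false :: _, 0, h => by simp [firstYes] at h
  | false :: _, _ + 1, h => by
    simp only [firstYes, Bool.false_eq_true, if_false, List.getElem?_cons_succ,
      List.length_cons] at h ⊢
    rw [eq_length_of_getElem?_firstYes_eq_true h]

theorem firstYes_congr : ∀ {L L' : List Bool}, L'.length = L.length →
    (∀ n < (firstYes L).length, L'[n]? = L[n]?) → firstYes L' = firstYes L
  | [], [], _, _ => rfl
  | [], _ :: _, h, _ | _ :: _, [], h, _ => by simp at h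
  | b :: L, b' :: L', hlen, h => by
    obtain rfl : b = b' := by simpa using (h 0 (by cases b <;> simp [firstYes])).symm
    cases b
    · simp only [firstYes, Bool.false_eq_true, if_false, List.cons.injEq, true_and]
      exact firstYes_congr (by simpa using hlen) fun n hn => by
        simpa using h (n + 1) (by simpa [firstYes])
    · rfl

noncomputable def yesIndicator (a : List Bool) (n : ℕ) : ℝ :=
  if n + 1 = a.length ∧ a[n]? = some true then 1 else 0

theorem yesIndicator_firstYes {L : List Bool} {n : ℕ} {b : Bool} (h : (firstYes L)[n]? = some b) :
    yesIndicator (firstYes L) n = if b then 1 else 0 := by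
  cases b
  · simp [yesIndicator, h]
  · simp [yesIndicator, h, eq_length_of_getElem?_firstYes_eq_true h]

theorem sum_range_yesIndicator_le_one (a : List Bool) (N : ℕ) :
    ∑ n ∈ Finset.range N, yesIndicator a n ≤ 1 := by
  simp only [yesIndicator, Finset.sum_boole]
  exact_mod_cast Finset.card_le_one.2 fun i hi j hj => by
    simp only [Finset.mem_filter] at hi hj
    omega

theorem decide_le_add_shift {θ ρ q q' ν c : ℝ} (h₁ : q' ≤ q + c) (h₂ : q ≤ q' + (1 - c)) :
    decide (θ + (ρ + c) ≤ q' + (ν + if decide (θ + ρ ≤ q + ν) then 1 else 0)) =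
      decide (θ + ρ ≤ q + ν) := by
  by_cases h : θ + ρ ≤ q + ν
  · simp only [h, decide_true, if_true, decide_eq_true_eq]
    linarith
  · simp only [h, decide_false, Bool.false_eq_true, if_false, add_zero, decide_eq_false_iff_not]
    linarith

theorem firstYes_ofFn_shift {m : ℕ} {θ Q Q' : Fin m → ℝ} {c : ℝ} (h₁ : ∀ n, Q' n ≤ Q n + c)
    (h₂ : ∀ n, Q n ≤ Q' n + (1 - c)) {ρ : ℝ} {ν : Fin m → ℝ} {a : List Bool}
    (ha : firstYes (List.ofFn fun n => decide (θ n + ρ ≤ Q n + ν n)) = a) :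
    firstYes (List.ofFn fun n => decide (θ n + (ρ + c) ≤ Q' n + (ν n + yesIndicator a n))) = a := by
  subst ha
  set p : Fin m → Bool := fun n => decide (θ n + ρ ≤ Q n + ν n)
  refine firstYes_congr (by simp) fun n hn => ?_
  have hnm : n < m := by simpa using hn.trans_le (firstYes_prefix _).length_le
  have hp : (List.ofFn p)[n]? = some (p ⟨n, hnm⟩) := by simp [hnm]
  have hfp : (firstYes (List.ofFn p))[n]? = some (p ⟨n, hnm⟩) := by
    rw [List.getElem?_eq_getElem hn, ← hp, List.prefix_iff_getElem?.1 (firstYes_prefix _) n hn]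
  rw [hp, List.getElem?_ofFn, dif_pos hnm, yesIndicator_firstYes hfp]
  exact congrArg some (decide_le_add_shift (h₁ ⟨n, hnm⟩) (h₂ ⟨n, hnm⟩))

theorem qj_le_qj_cons {v : ℤ} (hv : 0 ≤ v) (D : Multiset ℤ) (j : ℕ) :
    qj D j ≤ qj (v ::ₘ D) j := by
  unfold qj
  gcongr
  rw [Multiset.filter_cons]
  split_ifs <;> simp [hv]

theorem qj_cons_le (v : ℤ) (D : Multiset ℤ) (j : ℕ) :
    qj (v ::ₘ D) j ≤ qj D j + 1 := by
  unfold qj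
  rw [Multiset.filter_cons]
  split_ifs with h
  · rw [Multiset.sum_add, Multiset.sum_singleton, Int.cast_add, add_div, add_comm]
    gcongr
    rw [div_le_one (by positivity)]
    exact_mod_cast h
  · simp

theorem exists_qj_sandwich {D D' : Multiset ℤ} (hD : ∀ v ∈ D, 0 ≤ v) (hD' : ∀ v ∈ D', 0 ≤ v)
    (hnb : (∃ a : ℤ, D' = a ::ₘ D) ∨ (∃ a : ℤ, D = a ::ₘ D')) :
    ∃ c : ℝ, 0 ≤ c ∧ c ≤ 1 ∧ (∀ j, qj D' j ≤ qj D j + c) ∧ ∀ j, qj D j ≤ qj D' j + (1 - c) := by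
  rcases hnb with ⟨v, rfl⟩ | ⟨v, rfl⟩
  · have hv := hD' v (Multiset.mem_cons_self v D)
    exact ⟨1, zero_le_one, le_rfl, qj_cons_le v D, fun j => by simpa using qj_le_qj_cons hv D j⟩
  · have hv := hD v (Multiset.mem_cons_self v D')
    exact ⟨0, le_rfl, zero_le_one, fun j => by simpa using qj_le_qj_cons hv D' j,
      fun j => by simpa using qj_cons_le v D' j⟩

noncomputable def svtThreshold (K : ℕ) (l r : ℝ) : Fin (K + K) → ℝ :=
  Fin.append (fun j => r / 2 ^ ((j : ℕ) + 1)) (fun j => (l + 1) / 2 ^ ((j : ℕ) + 1))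

noncomputable def svtQuery (K : ℕ) (D : Multiset ℤ) : Fin (K + K) → ℝ :=
  Fin.append (fun j => qj D ((j : ℕ) + 1)) (fun j => qj D ((j : ℕ) + 1))

theorem svtOutcomes_eq_ofFn (K : ℕ) (l r : ℝ) (D : Multiset ℤ) (ρ : ℝ) (ν ν' : Fin K → ℝ) :
    svtOutcomes K l r D ρ ν ν' = List.ofFn fun n =>
      decide (svtThreshold K l r n + ρ ≤ svtQuery K D n + Fin.append ν ν' n) := by
  rw [svtOutcomes, ← List.ofFn_fin_append]
  congr 1
  funext n
  refine Fin.addCases (fun j => ?_) (fun j => ?_) n <;>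
    simp only [svtThreshold, svtQuery, Fin.append_left, Fin.append_right]

theorem svtQuery_rel {K : ℕ} {D D' : Multiset ℤ} {P : ℝ → ℝ → Prop}
    (h : ∀ j, P (qj D j) (qj D' j)) (n : Fin (K + K)) : P (svtQuery K D n) (svtQuery K D' n) := by
  refine Fin.addCases (fun j => ?_) (fun j => ?_) n <;>
    simp only [svtQuery, Fin.append_left, Fin.append_right, h]

noncomputable def svtShift (K : ℕ) (c : ℝ) (a : List Bool) : ℝ × (Fin K → ℝ) × (Fin K → ℝ) :=
  (c, fun j => yesIndicator a j, fun j => yesIndicator a (K + j))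

theorem svtTranscript_add_svtShift {K : ℕ} {l r : ℝ} {D D' : Multiset ℤ} {c : ℝ}
    (h₁ : ∀ j, qj D' j ≤ qj D j + c) (h₂ : ∀ j, qj D j ≤ qj D' j + (1 - c))
    {ω : ℝ × (Fin K → ℝ) × (Fin K → ℝ)} {a : List Bool}
    (ha : svtTranscript K l r D ω.1 ω.2.1 ω.2.2 = a) :
    let ω' := ω + svtShift K c a
    svtTranscript K l r D' ω'.1 ω'.2.1 ω'.2.2 = a := by
  have hν (n : Fin (K + K)) : Fin.append (ω + svtShift K c a).2.1 (ω + svtShift K c a).2.2 n =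
      Fin.append ω.2.1 ω.2.2 n + yesIndicator a n := by
    refine Fin.addCases (fun j => ?_) (fun j => ?_) n <;>
      simp only [svtShift, Prod.snd_add, Prod.fst_add, Pi.add_apply, Fin.append_left,
        Fin.append_right, Fin.val_castAdd, Fin.val_natAdd]
  intro ω'
  simp only [ω', svtTranscript, svtOutcomes_eq_ofFn, hν] at ha ⊢
  exact firstYes_ofFn_shift (svtQuery_rel (P := fun q q' => q' ≤ q + c) h₁)
    (svtQuery_rel (P := fun q q' => q ≤ q' + (1 - c)) h₂) ha

theorem svtShift_cost_le {K : ℕ} {c : ℝ} (hc₀ : 0 ≤ c) (hc₁ : c ≤ 1) (a : List Bool) :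
    |(svtShift K c a).1| + ∑ i, |(svtShift K c a).2.1 i| + ∑ i, |(svtShift K c a).2.2 i| ≤ 2 := by
  have hnn (n : ℕ) : 0 ≤ yesIndicator a n := by unfold yesIndicator; split_ifs <;> norm_num
  have hsum : ∑ i : Fin K, yesIndicator a i + ∑ i : Fin K, yesIndicator a (K + i) ≤ 1 := by
    rw [Fin.sum_univ_eq_sum_range (yesIndicator a),
      Fin.sum_univ_eq_sum_range (fun i => yesIndicator a (K + i)), ← Finset.sum_range_add]
    exact sum_range_yesIndicator_le_one a _
  simp only [svtShift, abs_of_nonneg hc₀, abs_of_nonneg (hnn _)]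
  linarith

theorem measurableSet_svtTranscript_eq (K : ℕ) (l r : ℝ) (D : Multiset ℤ) (a : List Bool) :
    MeasurableSet
      {ω : ℝ × (Fin K → ℝ) × (Fin K → ℝ) | svtTranscript K l r D ω.1 ω.2.1 ω.2.2 = a} := by
  simp only [svtTranscript, svtOutcomes_eq_ofFn]
  have hcmp : Measurable fun (ω : ℝ × (Fin K → ℝ) × (Fin K → ℝ)) (n : Fin (K + K)) =>
      decide (svtThreshold K l r n + ω.1 ≤ svtQuery K D n + Fin.append ω.2.1 ω.2.2 n) := by
    refine measurable_pi_lambda _ fun n => measurable_to_bool ?_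
    simp only [Set.preimage, Set.mem_singleton_iff, decide_eq_true_eq]
    refine measurableSet_le (by fun_prop) (measurable_const.add ?_)
    refine Fin.addCases (fun j => ?_) (fun j => ?_) n <;>
      simp only [Fin.append_left, Fin.append_right] <;> fun_prop
  exact hcmp (Set.to_countable {p : Fin (K + K) → Bool | firstYes (List.ofFn p) = a}).measurableSet

theorem svtNoise_transcript_le {ε : ℝ} (hε : 0 < ε) {K : ℕ} {l r : ℝ} {D D' : Multiset ℤ}
    {c : ℝ} (hc₀ : 0 ≤ c) (hc₁ : c ≤ 1) (h₁ : ∀ j, qj D' j ≤ qj D j + c)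
    (h₂ : ∀ j, qj D j ≤ qj D' j + (1 - c)) (a : List Bool) :
    svtNoise ε K {ω | svtTranscript K l r D ω.1 ω.2.1 ω.2.2 = a} ≤
      ENNReal.ofReal (exp ε) * svtNoise ε K {ω | svtTranscript K l r D' ω.1 ω.2.1 ω.2.2 = a} := by
  set x := svtShift K c a
  have hcost : ε / 2 * (|x.1| + ∑ i, |x.2.1 i| + ∑ i, |x.2.2 i|) ≤ ε := by
    nlinarith [svtShift_cost_le (K := K) hc₀ hc₁ a]
  calc svtNoise ε K {ω | svtTranscript K l r D ω.1 ω.2.1 ω.2.2 = a}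
      ≤ svtNoise ε K ((· + x) ⁻¹' {ω | svtTranscript K l r D' ω.1 ω.2.1 ω.2.2 = a}) :=
        measure_mono fun ω hω => svtTranscript_add_svtShift h₁ h₂ hω
    _ = (svtNoise ε K).map (· + x) {ω | svtTranscript K l r D' ω.1 ω.2.1 ω.2.2 = a} :=
        (Measure.map_apply (measurable_add_const x) (measurableSet_svtTranscript_eq ..)).symm
    _ ≤ ENNReal.ofReal (exp ε) *
          svtNoise ε K {ω | svtTranscript K l r D' ω.1 ω.2.1 ω.2.2 = a} := by
        refine (Measure.le_iff'.1 (svtNoise_map_add_le hε x) _).trans ?_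
        rw [Measure.smul_apply, ENNReal.smul_def, smul_eq_mul]
        gcongr
        exact ENNReal.ofReal_le_ofReal (exp_le_exp.2 hcost)

theorem svtsum_is_DP_general (ε : ℝ) (hε : 0 < ε) (K : ℕ) (l r : ℝ)
    (D D' : Multiset ℤ)
    (hD : ∀ v ∈ D, 0 ≤ v ∧ v ≤ 2 ^ K) (hD' : ∀ v ∈ D', 0 ≤ v ∧ v ≤ 2 ^ K)
    (hnb : (∃ a : ℤ, D' = a ::ₘ D) ∨ (∃ a : ℤ, D = a ::ₘ D')) :
    (∀ a : List Bool,
      svtNoise ε K {ω | svtTranscript K l r D ω.1 ω.2.1 ω.2.2 = a} ≤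
        ENNReal.ofReal (Real.exp ε) *
          svtNoise ε K {ω | svtTranscript K l r D' ω.1 ω.2.1 ω.2.2 = a}) ∧
    (∀ o : Bool,
      svtNoise ε K {ω | svtOutput K (svtTranscript K l r D ω.1 ω.2.1 ω.2.2) = o} ≤
        ENNReal.ofReal (Real.exp ε) *
          svtNoise ε K {ω | svtOutput K (svtTranscript K l r D' ω.1 ω.2.1 ω.2.2) = o}) := by
  obtain ⟨c, hc₀, hc₁, h₁, h₂⟩ :=
    exists_qj_sandwich (fun v hv => (hD v hv).1) (fun v hv => (hD' v hv).1) hnb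
  have htranscript := svtNoise_transcript_le (K := K) (l := l) (r := r) hε hc₀ hc₁ h₁ h₂
  exact ⟨htranscript, fun o => measure_preimage_le_of_forall_fiber
    (measurableSet_svtTranscript_eq K l r D) (measurableSet_svtTranscript_eq K l r D')
    htranscript {a | svtOutput K a = o}⟩

/-- `SVT_sum` is `ε`-differentially private: for neighboring databases `D ≈ D'`
(finite multisets of integers in `{0, …, 2^K}` differing by insertion of one
element) and every transcript `a`,
`Pr[SVT_sum(D) has transcript a] ≤ e^ε · Pr[SVT_sum(D') has transcript a]`,
and the same multiplicative bound holds for each output in `{0, 1}`. -/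
theorem svtsum_is_DP (ε : ℝ) (hε : 0 < ε) (K : ℕ) (hK : 1 ≤ K) (l r : ℝ) (hlr : l < r)
    (D D' : Multiset ℤ)
    (hD : ∀ v ∈ D, 0 ≤ v ∧ v ≤ 2 ^ K) (hD' : ∀ v ∈ D', 0 ≤ v ∧ v ≤ 2 ^ K)
    (hnb : (∃ a : ℤ, D' = a ::ₘ D) ∨ (∃ a : ℤ, D = a ::ₘ D')) :
    (∀ a : List Bool,
      svtNoise ε K {ω | svtTranscript K l r D ω.1 ω.2.1 ω.2.2 = a} ≤
        ENNReal.ofReal (Real.exp ε) *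
          svtNoise ε K {ω | svtTranscript K l r D' ω.1 ω.2.1 ω.2.2 = a}) ∧
    (∀ o : Bool,
      svtNoise ε K {ω | svtOutput K (svtTranscript K l r D ω.1 ω.2.1 ω.2.2) = o} ≤
        ENNReal.ofReal (Real.exp ε) *
          svtNoise ε K {ω | svtOutput K (svtTranscript K l r D' ω.1 ω.2.1 ω.2.2) = o}) :=
  svtsum_is_DP_general ε hε K l r D D' hD hD' hnb
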